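/- arXiv:1003.4494 — 5 statements merged into one kernel-verified Lean document; each statement's English description precedes it below -/
import Mathlib

section
/- In the twist-knot game TKNTK with an even number n of twist precrossings, the second player (King Lear, who wins if the final resolution is knotted) has a winning strategy. -/
/-- The sign of a crossing resolution: `true ↦ +1`, `false ↦ -1`. -/
def sgn (b : Bool) : ℤ := if b then 1 else -1

/-- Sum of the signs of the `n` twist crossings (indices `0, …, n-1`). -/
def twistSum (n : ℕ) (f : Fin (n + 2) → Bool) : ℤ :=
  ∑ i : Fin n, sgn (f (Fin.castLE (by omega) i))

/-- A full resolution of the twist-knot shadow with `n` twist precrossings and two clasp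
precrossings (indices `n` and `n+1`) is knotted iff the clasp signs agree and the twist
sum either has absolute value `≥ 2` or equals the common clasp sign. -/
def Knotted (n : ℕ) (f : Fin (n + 2) → Bool) : Prop :=
  f ⟨n, by omega⟩ = f ⟨n + 1, by omega⟩ ∧
    (2 ≤ |twistSum n f| ∨ twistSum n f = sgn (f ⟨n, by omega⟩))

/-- Partial resolutions: each of the `k` crossings is unresolved (`none`) or carries a sign. -/
abbrev PartialRes (k : ℕ) := Fin k → Option Bool

/-- `Force A fuel moverIsForcer p` : with `fuel` moves remaining from position `p`, the
player whose winning condition on full resolutions is `A` can force the game (in which the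
two players alternately pick a still-unresolved crossing and assign it a sign of their
choice) to end in a full resolution satisfying `A`.  This backward-induction predicate is
equivalent to the existence of a winning strategy in the finite game. -/
def Force {k : ℕ} (A : (Fin k → Bool) → Prop) : ℕ → Bool → PartialRes k → Prop
  | 0, _, p => ∃ f : Fin k → Bool, (∀ i, p i = some (f i)) ∧ A f
  | m + 1, true, p => ∃ i, p i = none ∧ ∃ s : Bool,
      Force A m false (Function.update p i (some s))
  | m + 1, false, p => ∀ i, p i = none → ∀ s : Bool,
      Force A m true (Function.update p i (some s))

/-- The totally unresolved shadow. -/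
def emptyRes (k : ℕ) : PartialRes k := fun _ => none

/-!
King Lear answers each move of Ursula at once. A clasp crossing he answers with the other clasp
crossing and the same sign, so the clasp signs agree. A twist crossing he answers with another
twist crossing, signed like the partial twist sum just after Ursula's move. Since `n` is even,
such a twist crossing is always left, and after each of his replies the partial twist sum is even
(two signs were added) and nonzero (his sign pushes it away from zero). So the final twist sum
`T` satisfies `2 ≤ |T|`.
-/

open Finset Function

theorem Fin.castAdd_ne_natAdd {n m : ℕ} (j : Fin n) (c : Fin m) :
    Fin.castAdd m j ≠ Fin.natAdd n c :=
  Fin.ne_of_lt (by simp [Fin.lt_def]; omega)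

section PartialAssignment

variable {ι : Type*} [Fintype ι]

def unresolved (q : ι → Option Bool) : Finset ι := {i | q i = none}

def partialSum (q : ι → Option Bool) : ℤ := ∑ i, (q i).elim 0 sgn

variable [DecidableEq ι] {q : ι → Option Bool} {i : ι}

theorem card_unresolved_update_add_one (hi : q i = none) (s : Bool) :
    #(unresolved (update q i (some s))) + 1 = #(unresolved q) := by
  have : unresolved (update q i (some s)) = (unresolved q).erase i := by
    ext j
    rcases eq_or_ne j i with rfl | hj <;> simp [unresolved, update_apply, *]
  rw [this, card_erase_add_one (by simpa [unresolved])]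

theorem partialSum_update (hi : q i = none) (s : Bool) :
    partialSum (update q i (some s)) = partialSum q + sgn s := by
  unfold partialSum
  rw [← add_sum_erase _ _ (mem_univ i), ← add_sum_erase _ _ (mem_univ i), update_self, hi,
    sum_congr rfl fun j hj => by rw [update_of_ne (ne_of_mem_erase hj)]]
  simp only [Option.elim_some, Option.elim_none, zero_add, add_comm]

end PartialAssignment

theorem odd_sgn (b : Bool) : Odd (sgn b) := by
  cases b <;> decide

theorem add_sgn_decide_pos_ne_zero (x : ℤ) : x + sgn (decide (0 < x)) ≠ 0 := by
  unfold sgn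
  split_ifs with h <;> simp only [decide_eq_true_eq] at h <;> omega

theorem two_le_abs_of_even_of_ne_zero {x : ℤ} (hx : Even x) (h0 : x ≠ 0) : 2 ≤ |x| := by
  obtain ⟨k, rfl⟩ := hx
  rcases abs_cases (k + k) with ⟨h, _⟩ | ⟨h, _⟩ <;> omega

section TwistInvariant

variable {ι : Type*} [Fintype ι]

structure TwistInvariant (q : ι → Option Bool) : Prop where
  even_partialSum : Even (partialSum q)
  even_card_unresolved : Even #(unresolved q)
  partialSum_ne_zero_or_eq_none : partialSum q ≠ 0 ∨ ∀ i, q i = none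

theorem TwistInvariant.exists_reply [DecidableEq ι] {q : ι → Option Bool} (h : TwistInvariant q)
    {i : ι} (hi : q i = none) (s : Bool) :
    ∃ j, update q i (some s) j = none ∧
      ∃ t, TwistInvariant (update (update q i (some s)) j (some t)) := by
  have hcard₁ := card_unresolved_update_add_one hi s
  set q₁ := update q i (some s)
  obtain ⟨j, hj⟩ : (unresolved q₁).Nonempty := by
    rw [← card_pos]
    obtain ⟨k, hk⟩ := h.even_card_unresolved
    have : 0 < #(unresolved q) := card_pos.mpr ⟨i, by simpa [unresolved]⟩
    omega
  have hj : q₁ j = none := by simpa [unresolved] using hj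
  have hsum₁ : Odd (partialSum q₁) := by
    rw [partialSum_update hi]
    exact h.even_partialSum.add_odd (odd_sgn s)
  refine ⟨j, hj, decide (0 < partialSum q₁), ?_, ?_, Or.inl ?_⟩
  · rw [partialSum_update hj]
    exact hsum₁.add_odd (odd_sgn _)
  · obtain ⟨k, hk⟩ := h.even_card_unresolved
    have hcard₂ := card_unresolved_update_add_one hj (decide (0 < partialSum q₁))
    exact ⟨k - 1, by omega⟩
  · rw [partialSum_update hj]
    exact add_sgn_decide_pos_ne_zero _

end TwistInvariant

theorem force_of_reply_invariant {k : ℕ} {A : (Fin k → Bool) → Prop} (I : PartialRes k → Prop)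
    (final : ∀ f, I (some ∘ f) → A f)
    (reply : ∀ p, I p → ∀ i, p i = none → ∀ s : Bool, ∃ j, update p i (some s) j = none ∧
      ∃ t : Bool, I (update (update p i (some s)) j (some t))) :
    ∀ m (p : PartialRes k), I p → #(unresolved p) = 2 * m → Force A (2 * m) false p := by
  intro m
  induction m with
  | zero =>
    intro p hp hcard
    rw [Nat.mul_zero, card_eq_zero] at hcard
    have hres : ∀ i, ∃ b, p i = some b := fun i =>
      Option.ne_none_iff_exists'.mp fun hi =>
        notMem_empty i (hcard ▸ by simpa [unresolved] using hi)
    choose f hf using hres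
    obtain rfl : p = some ∘ f := funext hf
    exact ⟨f, fun _ => rfl, final f hp⟩
  | succ m ih =>
    intro p hp hcard i hi s
    obtain ⟨j, hj, t, hpt⟩ := reply p hp i hi s
    refine ⟨j, hj, t, ih _ hpt ?_⟩
    have h₁ := card_unresolved_update_add_one hi s
    have h₂ := card_unresolved_update_add_one hj t
    omega

structure LearInvariant (n : ℕ) (p : PartialRes (n + 2)) : Prop where
  clasp_eq : p (Fin.natAdd n 0) = p (Fin.natAdd n 1)
  twist : TwistInvariant (p ∘ Fin.castAdd 2)

namespace LearInvariant

variable {n : ℕ}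

theorem empty (hn : Even n) : LearInvariant n (emptyRes (n + 2)) where
  clasp_eq := rfl
  twist := by
    refine ⟨?_, ?_, Or.inr fun _ => rfl⟩ <;> simp [partialSum, unresolved, emptyRes, hn]

theorem knotted (hn : 1 ≤ n) {f : Fin (n + 2) → Bool} (h : LearInvariant n (some ∘ f)) :
    Knotted n f := by
  have hsum : partialSum (some ∘ f ∘ Fin.castAdd 2) = twistSum n f := rfl
  have hne : partialSum (some ∘ f ∘ Fin.castAdd 2) ≠ 0 :=
    h.twist.partialSum_ne_zero_or_eq_none.resolve_right fun h0 =>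
      Option.some_ne_none _ (h0 ⟨0, hn⟩)
  exact ⟨Option.some_injective _ h.clasp_eq,
    Or.inl (hsum ▸ two_le_abs_of_even_of_ne_zero h.twist.even_partialSum hne)⟩

theorem exists_reply {p : PartialRes (n + 2)} (h : LearInvariant n p) {i : Fin (n + 2)}
    (hi : p i = none) (s : Bool) : ∃ j, update p i (some s) j = none ∧
      ∃ t : Bool, LearInvariant n (update (update p i (some s)) j (some t)) := by
  induction i using Fin.addCases with
  | left j =>
    obtain ⟨j', hj', t, ht⟩ := h.twist.exists_reply hi s
    simp only [← update_comp_eq_of_injective _ (Fin.castAdd_injective n 2)] at hj' ht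
    refine ⟨Fin.castAdd 2 j', hj', t, ?_, ht⟩
    simpa only [update_of_ne (Fin.castAdd_ne_natAdd _ _).symm] using h.clasp_eq
  | right c =>
    have hrev : p (Fin.natAdd n c.rev) = none := by
      have := h.clasp_eq
      fin_cases c <;> simp_all
    refine ⟨Fin.natAdd n c.rev, ?_, s, ?_, ?_⟩
    · have hne : Fin.natAdd n c.rev ≠ Fin.natAdd n c := by fin_cases c <;> simp [Fin.ext_iff]
      rwa [update_of_ne hne]
    · fin_cases c <;> simp
    · simp only [update_comp_eq_of_forall_ne _ _ fun j => Fin.castAdd_ne_natAdd j _]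
      exact h.twist

end LearInvariant

/-- TKNTK on a twist-knot shadow with an even number `n` of twist precrossings:
King Lear (goal: knotted), moving second, has a winning strategy. -/
theorem tkntk_even_lear_second_wins (n : ℕ) (hn1 : 1 ≤ n) (hn : Even n) :
    Force (Knotted n) (n + 2) false (emptyRes (n + 2)) := by
  obtain ⟨m, rfl⟩ := hn
  have hcard : #(unresolved (emptyRes (m + m + 2))) = 2 * (m + 1) := by
    simp [unresolved, emptyRes, mul_add, two_mul]
  have := force_of_reply_invariant (LearInvariant (m + m)) (fun _ h => h.knotted hn1)
    (fun _ h _ hi => h.exists_reply hi) (m + 1) _ (LearInvariant.empty ⟨m, rfl⟩) hcard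
  rwa [show 2 * (m + 1) = m + m + 2 by ring] at this
end

section
/- In the twist-knot game TKNTK with an even number n of twist precrossings, if King Lear (who wins if the final resolution is knotted) moves first, then Ursula (the second player, who wins if the final resolution is unknotted) has a winning strategy. -/
namespace PartialRes

open Finset Function

variable {k : ℕ}

def unresolved (p : PartialRes k) : Finset (Fin k) :=
  univ.filter (p · = none)

@[simp]
lemma mem_unresolved {p : PartialRes k} {i : Fin k} : i ∈ p.unresolved ↔ p i = none := by
  simp [unresolved]

lemma card_unresolved_update {p : PartialRes k} {i : Fin k} (hi : p i = none) (s : Bool) :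
    #(unresolved (update p i (some s))) = #p.unresolved - 1 := by
  have : unresolved (update p i (some s)) = p.unresolved.erase i := by
    ext j
    rcases eq_or_ne j i with rfl | hji <;> simp [update_of_ne, *]
  rw [this, card_erase_of_mem (mem_unresolved.2 hi)]

def Paired (a b : Fin k) (p : PartialRes k) : Prop :=
  (p a = none ∧ p b = none) ∨ ∃ c : Bool, p a = some c ∧ p b = some (!c)

variable {a b : Fin k} {p : PartialRes k}

lemma Paired.symm (hp : p.Paired a b) : p.Paired b a := by
  rcases hp with ⟨ha, hb⟩ | ⟨c, ha, hb⟩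
  · exact Or.inl ⟨hb, ha⟩
  · exact Or.inr ⟨!c, hb, by rw [ha, Bool.not_not]⟩

lemma Paired.update_of_ne_of_ne (hp : p.Paired a b) {i : Fin k} (hia : i ≠ a) (hib : i ≠ b)
    (s : Bool) : Paired a b (update p i (some s)) := by
  simpa only [Paired, update_of_ne hia.symm, update_of_ne hib.symm] using hp

lemma paired_update_update (hab : a ≠ b) (s : Bool) :
    Paired a b (update (update p a (some s)) b (some !s)) :=
  Or.inr ⟨s, by rw [update_of_ne hab, update_self], update_self ..⟩

lemma Paired.eq_none_of_eq_none (hp : p.Paired a b) (ha : p a = none) : p b = none := by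
  rcases hp with ⟨-, hb⟩ | ⟨c, ha', -⟩
  · exact hb
  · simp [ha] at ha'

lemma Paired.even_card_unresolved_inter (hp : p.Paired a b) (hab : a ≠ b) :
    Even #({a, b} ∩ p.unresolved) := by
  rcases hp with ⟨ha, hb⟩ | ⟨c, ha, hb⟩
  · rw [inter_eq_left.2 (by simp [insert_subset_iff, ha, hb]), card_pair hab]
    exact even_two
  · rw [disjoint_iff_inter_eq_empty.1 (by simp [ha, hb])]
    exact ⟨0, rfl⟩

lemma Paired.exists_unresolved_ne (hp : p.Paired a b) (hab : a ≠ b)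
    (hodd : Odd #p.unresolved) : ∃ j, p j = none ∧ j ≠ a ∧ j ≠ b := by
  have hsdiff : Odd #(p.unresolved \ {a, b}) := by
    have := card_sdiff_add_card_inter p.unresolved {a, b}
    rw [inter_comm] at this
    have := hp.even_card_unresolved_inter hab
    grind
  obtain ⟨j, hj⟩ := card_pos.1 hsdiff.pos
  simp only [mem_sdiff, mem_unresolved, mem_insert, mem_singleton, not_or] at hj
  exact ⟨j, hj.1, hj.2⟩

lemma Paired.exists_reply (hp : p.Paired a b) (hab : a ≠ b) {t : ℕ}
    (hcard : #p.unresolved = 2 * t + 2) {i : Fin k} (hi : p i = none) (s : Bool) :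
    ∃ j, update p i (some s) j = none ∧
      ∃ s', Paired a b (update (update p i (some s)) j (some s')) := by
  by_cases hia : i = a
  · subst hia
    refine ⟨b, ?_, !s, paired_update_update hab s⟩
    rw [update_of_ne hab.symm]
    exact hp.eq_none_of_eq_none hi
  by_cases hib : i = b
  · subst hib
    refine ⟨a, ?_, !s, (paired_update_update hab.symm s).symm⟩
    rw [update_of_ne hab]
    exact hp.symm.eq_none_of_eq_none hi
  have hodd : Odd #(unresolved (update p i (some s))) := by
    rw [card_unresolved_update hi, hcard]
    exact ⟨t, rfl⟩
  obtain ⟨j, hj, hja, hjb⟩ := (hp.update_of_ne_of_ne hia hib s).exists_unresolved_ne hab hodd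
  exact ⟨j, hj, false, (hp.update_of_ne_of_ne hia hib s).update_of_ne_of_ne hja hjb false⟩

lemma force_of_paired (hab : a ≠ b) {A : (Fin k → Bool) → Prop}
    (hA : ∀ f, f a ≠ f b → A f) (t : ℕ) :
    ∀ p : PartialRes k, #p.unresolved = 2 * t → p.Paired a b → Force A (2 * t) false p := by
  induction t with
  | zero =>
    intro p hcard hp
    have hres : ∀ i, p i ≠ none := fun i hi => by
      simpa [card_eq_zero.1 hcard] using mem_unresolved.2 hi
    refine ⟨fun i => (p i).getD false, fun i => ?_, hA _ ?_⟩
    · obtain ⟨c, hc⟩ := Option.ne_none_iff_exists'.1 (hres i)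
      simp [hc]
    · rcases hp with ⟨ha, -⟩ | ⟨c, ha, hb⟩
      · exact absurd ha (hres a)
      · simp [ha, hb]
  | succ t ih =>
    intro p hcard hp i hi s
    obtain ⟨j, hj, s', hp'⟩ := hp.exists_reply hab hcard hi s
    refine ⟨j, hj, s', ih _ ?_ hp'⟩
    rw [card_unresolved_update hj, card_unresolved_update hi, hcard]
    omega

end PartialRes

/-- TKNTK with an even number `n` of twist precrossings and King Lear moving first:
Ursula (goal: unknotted), moving second, has a winning strategy. -/
theorem tkntk_even_lear_first_ursula_wins (n : ℕ) (hn : Even n) :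
    Force (fun f => ¬ Knotted n f) (n + 2) false (emptyRes (n + 2)) := by
  obtain ⟨t, rfl⟩ := hn
  have hclasps : (⟨t + t, by omega⟩ : Fin (t + t + 2)) ≠ ⟨t + t + 1, by omega⟩ := by
    simp [Fin.ext_iff]
  have hlen : 2 * (t + 1) = t + t + 2 := by ring
  have hwin := PartialRes.force_of_paired hclasps (A := fun f => ¬ Knotted (t + t) f)
    (fun f hf hk => hf hk.1) (t + 1) (emptyRes _)
    (by simp [PartialRes.unresolved, emptyRes]; omega) (Or.inl ⟨rfl, rfl⟩)
  rwa [hlen] at hwin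
end

section
/- Adding a free extra move converts a second-player win into a first-player win: let G be a finite alternating game with binary outcome in which the second player has a winning strategy. Let G' be the game whose move set is that of G together with one new distinguished move d which may be played at most once during the game (and which has no effect on the outcome: the outcome of a play of G' is the outcome in G of the play with all occurrences of d deleted, where a play of G' consists of one more move than a play of G). Then the first player has a winning strategy in G': namely, play d first and thereafter follow the second-player winning strategy for G. -/
/-- The play of length `m` arising when the first player follows strategy `σ`
(moving at positions `0, 2, 4, …`) and the second follows `τ` (positions `1, 3, 5, …`);
each strategy maps the current history to the next move. -/
def play {M : Type*} (σ τ : List M → M) : ℕ → List M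
  | 0 => []
  | m + 1 =>
      let l := play σ τ m
      l ++ [if l.length % 2 = 0 then σ l else τ l]

/-!
Strategy stealing with a free move: the first player of `G'` spends the extra move `d = none`
at once, which hands the move to the opponent and so puts the first player in the position of
the second player of `G`. From then on every history of `G'` is `none :: p.map some` for a
history `p` of `G`, the two players swap roles, and deleting `d` turns the play of `G'`
into a play of `G` in which `τ` moves second against the opponent's strategy read on `G`.
-/

theorem play_length {M : Type*} (σ τ : List M → M) (m : ℕ) : (play σ τ m).length = m := by
  induction m with
  | zero => rfl
  | succ n ih => simp [play, ih]

theorem play_succ_eq_cons_map {M N : Type*} (σ τ : List M → M) (σ' τ' : List N → N) (x : N)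
    (g : M → N) (hx : σ' [] = x) (hσ' : ∀ p, σ' (x :: p.map g) = g (τ p))
    (hτ' : ∀ p, τ' (x :: p.map g) = g (σ p)) (m : ℕ) :
    play σ' τ' (m + 1) = x :: (play σ τ m).map g := by
  induction m with
  | zero => simp [play, hx]
  | succ m ih =>
    have hlen := play_length σ τ m
    rw [play, ih, play]
    simp only [List.length_cons, List.length_map, hlen, List.map_append, List.cons_append,
      List.map_cons, List.map_nil]
    congr 3
    rcases Nat.mod_two_eq_zero_or_one m with hm | hm
    · simp [hτ', hm, Nat.add_mod]
    · simp [hσ', hm, Nat.add_mod]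

def extraMoveThen {M : Type*} (τ : List M → M) (l : List (Option M)) : Option M :=
  if l = [] then none else some (τ (l.filterMap id))

theorem extraMoveThen_ne_none {M : Type*} (τ : List M → M) {l : List (Option M)}
    (hl : none ∈ l) : extraMoveThen τ l ≠ none := by
  have hne : l ≠ [] := List.ne_nil_of_mem hl
  simp [extraMoveThen, hne]

theorem extraMoveThen_cons_map_some {M : Type*} (τ : List M → M) (p : List M) :
    extraMoveThen τ (none :: p.map some) = some (τ p) := by
  simp [extraMoveThen, List.filterMap_map]

theorem extra_move_second_to_first_general (M : Type*) (k : ℕ) (W : Set (List M))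
    (h : ∃ τ : List M → M, ∀ σ : List M → M, play σ τ k ∈ W) :
    ∃ σ' : List (Option M) → Option M,
      (∀ l : List (Option M), none ∈ l → σ' l ≠ none) ∧
      ∀ τ' : List (Option M) → Option M, (∀ l, none ∈ l → τ' l ≠ none) →
        (play σ' τ' (k + 1)).countP (·.isNone) = 1 ∧
          (play σ' τ' (k + 1)).filterMap id ∈ W := by
  obtain ⟨τ, hτ⟩ := h
  refine ⟨extraMoveThen τ, fun l hl => extraMoveThen_ne_none τ hl, fun τ' hτ' => ?_⟩
  have hsome (p : List M) : (τ' (none :: p.map some)).isSome :=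
    Option.isSome_iff_ne_none.mpr (hτ' _ List.mem_cons_self)
  -- the opponent's strategy read on `G`; it lands in `M` because `τ'` never replays `none`
  let σ (p : List M) : M := (τ' (none :: p.map some)).get (hsome p)
  have hplay : play (extraMoveThen τ) τ' (k + 1) = none :: (play σ τ k).map some :=
    play_succ_eq_cons_map σ τ _ τ' none some (by simp [extraMoveThen])
      (extraMoveThen_cons_map_some τ) (fun p => (Option.some_get (hsome p)).symm) k
  rw [hplay]
  constructor
  · simp [List.countP_map]
  · simpa [List.filterMap_map] using hτ σ

/-- Adding one free extra move `d` (encoded as `none : Option M`, playable at most once per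
play and deleted before evaluating the outcome) converts a second-player win into a
first-player win: if the designated player wins the length-`k` game with winning set `W`
moving second, then in the length-`(k+1)` game over `Option M` the designated player has a
first-player strategy that never replays `d`, and against any opponent who respects the
at-most-one-`d` rule, the resulting play contains `d` exactly once and its `d`-deletion
lies in `W`. -/
theorem extra_move_second_to_first (M : Type*) [Nonempty M] (k : ℕ) (W : Set (List M))
    (h : ∃ τ : List M → M, ∀ σ : List M → M, play σ τ k ∈ W) :
    ∃ σ' : List (Option M) → Option M,
      (∀ l : List (Option M), none ∈ l → σ' l ≠ none) ∧
      ∀ τ' : List (Option M) → Option M, (∀ l, none ∈ l → τ' l ≠ none) →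
        (play σ' τ' (k + 1)).countP (·.isNone) = 1 ∧
          (play σ' τ' (k + 1)).filterMap id ∈ W :=
  extra_move_second_to_first_general M k W h
end

section
/- In the Much Ado About Knotting game on the twist-knot model with n ≥ 1 twist precrossings, the first player has a winning strategy. -/
/-- `f` extends the partial resolution `p`. -/
def Extends {k : ℕ} (p : PartialRes k) (f : Fin k → Bool) : Prop :=
  ∀ i b, p i = some b → f i = b

/-- A partial resolution is determined if all full resolutions extending it have the same
knotted-status. -/
def Determined (n : ℕ) (p : PartialRes (n + 2)) : Prop :=
  ∀ f g : Fin (n + 2) → Bool, Extends p f → Extends p g → (Knotted n f ↔ Knotted n g)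

/-- `MaakWins n fuel s p` : in Much Ado About Knotting on the twist-knot shadow with `n`
twist precrossings, from the partial resolution `p` with `fuel` unresolved crossings
remaining, the player to move — who is only allowed to resolve a crossing with the sign
`s` — has a winning strategy.  A player loses if the partial resolution is determined
immediately after their move; a move is winning if it leaves the position undetermined and
the opponent (playing the sign `!s`) has no winning reply. -/
def MaakWins (n : ℕ) : ℕ → Bool → PartialRes (n + 2) → Prop
  | 0, _, _ => False
  | fuel + 1, s, p => ∃ i, p i = none ∧
      ¬ Determined n (Function.update p i (some s)) ∧
      ¬ MaakWins n fuel (!s) (Function.update p i (some s))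

open Function

namespace TwistKnot

variable {n : ℕ}

def twist (n : ℕ) (i : Fin n) : Fin (n + 2) := Fin.castLE (by omega) i

def clasp₁ (n : ℕ) : Fin (n + 2) := ⟨n, by omega⟩

def clasp₂ (n : ℕ) : Fin (n + 2) := ⟨n + 1, by omega⟩

lemma twist_injective : Injective (twist n) := Fin.castLE_injective (by omega)

lemma twist_ne_clasp₁ (i : Fin n) : twist n i ≠ clasp₁ n := by
  simp [twist, clasp₁, Fin.ext_iff]; omega

lemma twist_ne_clasp₂ (i : Fin n) : twist n i ≠ clasp₂ n := by
  simp [twist, clasp₂, Fin.ext_iff]; omega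

lemma clasp₁_ne_clasp₂ : clasp₁ n ≠ clasp₂ n := by
  simp [clasp₁, clasp₂]

lemma eq_twist_or_clasp (k : Fin (n + 2)) : (∃ i, k = twist n i) ∨ k = clasp₁ n ∨ k = clasp₂ n := by
  rcases lt_trichotomy (k : ℕ) n with h | h | h
  · exact Or.inl ⟨⟨k, h⟩, rfl⟩
  · exact Or.inr (Or.inl (Fin.ext h))
  · exact Or.inr (Or.inr (Fin.ext (by simp [clasp₂]; omega)))

lemma knotted_iff (f : Fin (n + 2) → Bool) :
    Knotted n f ↔ f (clasp₁ n) = f (clasp₂ n) ∧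
      (2 ≤ |twistSum n f| ∨ twistSum n f = sgn (f (clasp₁ n))) := Iff.rfl

lemma twistSum_eq (f : Fin (n + 2) → Bool) : twistSum n f = ∑ i, sgn (f (twist n i)) := rfl

lemma sgn_not (s : Bool) : sgn (!s) = -sgn s := by cases s <;> simp [sgn]

lemma abs_sgn (s : Bool) : |sgn s| = 1 := by cases s <;> simp [sgn]

lemma sum_update_twist {M : Type*} [AddCommMonoid M] (g : Option Bool → M)
    (p : PartialRes (n + 2)) (i : Fin n) (v : Option Bool) :
    (∑ j, g (update p (twist n i) v (twist n j))) + g (p (twist n i)) =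
      (∑ j, g (p (twist n j))) + g v := by
  have hupd : (fun j => g (update p (twist n i) v (twist n j))) =
      update (fun j => g (p (twist n j))) i (g v) := by
    ext j
    rcases eq_or_ne j i with rfl | hji
    · simp
    · simp [hji, twist_injective.ne hji]
  rw [hupd, Finset.sum_update_of_mem (Finset.mem_univ i), Fintype.sum_eq_add_sum_compl i,
    Finset.compl_eq_univ_sdiff]
  abel

def freeTwists (n : ℕ) (p : PartialRes (n + 2)) : ℕ :=
  ∑ i, if p (twist n i) = none then 1 else 0

def resolvedSum (n : ℕ) (p : PartialRes (n + 2)) : ℤ :=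
  ∑ i, (p (twist n i)).elim 0 sgn

/-- The knotted-status of the full resolutions extending `p` depends on `p` only through its
profile. -/
structure Profile where
  c₁ : Option Bool
  c₂ : Option Bool
  free : ℕ
  sum : ℤ

def profile (n : ℕ) (p : PartialRes (n + 2)) : Profile :=
  ⟨p (clasp₁ n), p (clasp₂ n), freeTwists n p, resolvedSum n p⟩

lemma profile_emptyRes : profile n (emptyRes (n + 2)) = ⟨none, none, n, 0⟩ := by
  simp [profile, emptyRes, freeTwists, resolvedSum]

variable {p : PartialRes (n + 2)} {a b : Option Bool} {u : ℕ} {t : ℤ}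

lemma profile_update_twist (hp : profile n p = ⟨a, b, u + 1, t⟩) {i : Fin n}
    (hi : p (twist n i) = none) (x : Bool) :
    profile n (update p (twist n i) (some x)) = ⟨a, b, u, t + sgn x⟩ := by
  have hfree := sum_update_twist (fun o => if o = none then 1 else 0) p i (some x)
  have hsum := sum_update_twist (fun o => o.elim (0 : ℤ) sgn) p i (some x)
  simp only [hi, if_true, reduceCtorEq, if_false, Option.elim_none, Option.elim_some,
    add_zero] at hfree hsum
  simp only [profile, Profile.mk.injEq] at hp ⊢
  refine ⟨?_, ?_, ?_, ?_⟩
  · rw [update_of_ne (twist_ne_clasp₁ i).symm, hp.1]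
  · rw [update_of_ne (twist_ne_clasp₂ i).symm, hp.2.1]
  · unfold freeTwists at hp ⊢; omega
  · unfold resolvedSum at hp ⊢; rw [hsum, hp.2.2.2]

lemma profile_update_clasp₁ (hp : profile n p = ⟨a, b, u, t⟩) (v : Option Bool) :
    profile n (update p (clasp₁ n) v) = ⟨v, b, u, t⟩ := by
  simp only [profile, Profile.mk.injEq] at hp ⊢
  simp [update_of_ne clasp₁_ne_clasp₂.symm, freeTwists, resolvedSum, twist_ne_clasp₁,
    ← hp.2.1, ← hp.2.2.1, ← hp.2.2.2]

lemma profile_update_clasp₂ (hp : profile n p = ⟨a, b, u, t⟩) (v : Option Bool) :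
    profile n (update p (clasp₂ n) v) = ⟨a, v, u, t⟩ := by
  simp only [profile, Profile.mk.injEq] at hp ⊢
  simp [update_of_ne clasp₁_ne_clasp₂, freeTwists, resolvedSum, twist_ne_clasp₂,
    ← hp.1, ← hp.2.2.1, ← hp.2.2.2]

lemma exists_free_twist (hp : profile n p = ⟨a, b, u + 1, t⟩) : ∃ i, p (twist n i) = none := by
  by_contra! h
  have : freeTwists n p = 0 := Finset.sum_eq_zero fun i _ => if_neg (h i)
  have := congrArg Profile.free hp
  simp_all [profile]

def fill {k : ℕ} (p : PartialRes k) (c : Bool) : Fin k → Bool := fun i => (p i).getD c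

section fill

variable {k : ℕ} {q : PartialRes k} {i : Fin k} {c : Bool}

lemma fill_of_eq_some {b : Bool} (h : q i = some b) : fill q c i = b := by
  simp [fill, h]

lemma fill_of_eq_none (h : q i = none) : fill q c i = c := by
  simp [fill, h]

lemma extends_fill (q : PartialRes k) (c : Bool) : Extends q (fill q c) :=
  fun _ _ => fill_of_eq_some

end fill

lemma twistSum_fill (c : Bool) :
    twistSum n (fill p c) = resolvedSum n p + sgn c * freeTwists n p := by
  simp only [twistSum_eq, resolvedSum, freeTwists, Nat.cast_sum, Finset.mul_sum,
    ← Finset.sum_add_distrib]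
  refine Finset.sum_congr rfl fun i _ => ?_
  rcases h : p (twist n i) with _ | b
  · simp [fill_of_eq_none h]
  · simp [fill_of_eq_some h]

lemma twistSum_of_free_eq_zero (h : freeTwists n p = 0) {f : Fin (n + 2) → Bool}
    (hf : Extends p f) : twistSum n f = resolvedSum n p := by
  rw [twistSum_eq]
  refine Finset.sum_congr rfl fun i _ => ?_
  obtain ⟨b, hb⟩ : ∃ b, p (twist n i) = some b := by
    have := (Finset.sum_eq_zero_iff.1 h) i (Finset.mem_univ i)
    simpa [Option.ne_none_iff_exists'] using this
  rw [hb, hf _ _ hb]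
  rfl

lemma not_determined_of_fill (c c' : Bool) (h : Knotted n (fill p c))
    (h' : ¬ Knotted n (fill p c')) : ¬ Determined n p :=
  fun hdet => h' ((hdet _ _ (extends_fill p c') (extends_fill p c)).2 h)

lemma determined_of_clasps_ne {a b : Bool} (hp : profile n p = ⟨some a, some b, u, t⟩)
    (hab : a ≠ b) : Determined n p := by
  have h₁ : p (clasp₁ n) = some a := congrArg Profile.c₁ hp
  have h₂ : p (clasp₂ n) = some b := congrArg Profile.c₂ hp
  have hunknot : ∀ f, Extends p f → ¬ Knotted n f := fun f hf hk =>
    hab (by rw [← hf _ _ h₁, ← hf _ _ h₂]; exact ((knotted_iff f).1 hk).1)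
  exact fun f g hf hg => iff_of_false (hunknot f hf) (hunknot g hg)

lemma determined_of_unknotted {s : Bool} (hp : profile n p = ⟨some s, b, 0, t⟩)
    (ht : |t| < 2) (hts : t ≠ sgn s) : Determined n p := by
  have h₁ : p (clasp₁ n) = some s := congrArg Profile.c₁ hp
  have hfree : freeTwists n p = 0 := congrArg Profile.free hp
  have hsum : resolvedSum n p = t := congrArg Profile.sum hp
  have hunknot : ∀ f, Extends p f → ¬ Knotted n f := by
    intro f hf hk
    rw [knotted_iff, twistSum_of_free_eq_zero hfree hf, hsum, hf _ _ h₁] at hk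
    omega
  exact fun f g hf hg => iff_of_false (hunknot f hf) (hunknot g hg)

lemma determined_of_knotted {s : Bool} (hp : profile n p = ⟨some s, some s, 0, t⟩)
    (ht : 2 ≤ |t|) : Determined n p := by
  have h₁ : p (clasp₁ n) = some s := congrArg Profile.c₁ hp
  have h₂ : p (clasp₂ n) = some s := congrArg Profile.c₂ hp
  have hfree : freeTwists n p = 0 := congrArg Profile.free hp
  have hsum : resolvedSum n p = t := congrArg Profile.sum hp
  have hknot : ∀ f, Extends p f → Knotted n f := fun f hf =>
    (knotted_iff f).2 ⟨by rw [hf _ _ h₁, hf _ _ h₂],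
      Or.inl (by rwa [twistSum_of_free_eq_zero hfree hf, hsum])⟩
  exact fun f g hf hg => iff_of_true (hknot f hf) (hknot g hg)

lemma not_determined_balanced {s : Bool} (hp : profile n p = ⟨some s, none, u + 1, 0⟩) :
    ¬ Determined n p := by
  have h₁ : p (clasp₁ n) = some s := congrArg Profile.c₁ hp
  have h₂ : p (clasp₂ n) = none := congrArg Profile.c₂ hp
  have hfree : freeTwists n p = u + 1 := congrArg Profile.free hp
  have hsum : resolvedSum n p = 0 := congrArg Profile.sum hp
  refine not_determined_of_fill s (!s) ?_ fun hk => ?_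
  · rw [knotted_iff, twistSum_fill, hsum, hfree, fill_of_eq_some h₁, fill_of_eq_none h₂]
    refine ⟨rfl, ?_⟩
    rcases u with _ | u
    · right; simp
    · left; rw [zero_add, abs_mul, abs_sgn, one_mul, Nat.abs_cast]; omega
  · rw [knotted_iff, fill_of_eq_some h₁, fill_of_eq_none h₂] at hk
    cases s <;> simp at hk

lemma not_determined_pinned {s : Bool} (hp : profile n p = ⟨some s, some s, 1, -sgn s⟩) :
    ¬ Determined n p := by
  have h₁ : p (clasp₁ n) = some s := congrArg Profile.c₁ hp
  have h₂ : p (clasp₂ n) = some s := congrArg Profile.c₂ hp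
  have hfree : freeTwists n p = 1 := congrArg Profile.free hp
  have hsum : resolvedSum n p = -sgn s := congrArg Profile.sum hp
  refine not_determined_of_fill (!s) s ?_ fun hk => ?_
  · rw [knotted_iff, twistSum_fill, hsum, hfree, fill_of_eq_some h₁, fill_of_eq_some h₂]
    refine ⟨rfl, Or.inl ?_⟩
    cases s <;> simp [sgn]
  · rw [knotted_iff, twistSum_fill, hsum, hfree, fill_of_eq_some h₁] at hk
    cases s <;> simp [sgn] at hk

lemma maakWins_succ_iff {fuel : ℕ} {s : Bool} :
    MaakWins n (fuel + 1) s p ↔ ∃ k, p k = none ∧ ¬ Determined n (update p k (some s)) ∧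
      ¬ MaakWins n fuel (!s) (update p k (some s)) := Iff.rfl

lemma not_maakWins_pinned {s : Bool} (hp : profile n p = ⟨some s, some s, 1, -sgn s⟩) :
    ¬ MaakWins n 1 (!s) p := by
  rintro ⟨k, hk, hundet, -⟩
  rcases eq_twist_or_clasp k with ⟨i, rfl⟩ | rfl | rfl
  · refine hundet (determined_of_knotted (profile_update_twist hp hk (!s)) ?_)
    rw [sgn_not, ← two_mul, abs_mul, abs_neg, abs_sgn]; norm_num
  · exact absurd (congrArg Profile.c₁ hp) (by simp [profile, hk])
  · exact absurd (congrArg Profile.c₂ hp) (by simp [profile, hk])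

lemma not_maakWins_balanced {s : Bool} (u : ℕ) (hp : profile n p = ⟨some s, none, u + 1, 0⟩) :
    ¬ MaakWins n (u + 2) (!s) p := by
  induction u using Nat.strong_induction_on generalizing p with
  | _ u ih =>
  rintro ⟨k, hk, hundet, hlose⟩
  rw [Bool.not_not] at hlose
  rcases eq_twist_or_clasp k with ⟨i, rfl⟩ | rfl | rfl
  · have hq := profile_update_twist hp hk (!s)
    rw [zero_add, sgn_not] at hq
    rcases u with _ | _ | u
    · refine hundet (determined_of_unknotted hq ?_ ?_)
      · rw [abs_neg, abs_sgn]; norm_num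
      · cases s <;> simp [sgn]
    · have hr := profile_update_clasp₂ hq (some s)
      exact hlose (maakWins_succ_iff.2 ⟨clasp₂ n, congrArg Profile.c₂ hq,
        not_determined_pinned hr, not_maakWins_pinned hr⟩)
    · obtain ⟨j, hj⟩ := exists_free_twist hq
      have hr := profile_update_twist hq hj s
      rw [neg_add_cancel] at hr
      exact hlose (maakWins_succ_iff.2 ⟨twist n j, hj,
        not_determined_balanced hr, ih u (by omega) hr⟩)
  · exact absurd (congrArg Profile.c₁ hp) (by simp [profile, hk])
  · exact hundet (determined_of_clasps_ne (profile_update_clasp₂ hp _) (by simp))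

end TwistKnot

open TwistKnot

/-- In Much Ado About Knotting on the twist-knot shadow with `n ≥ 1` twist precrossings,
the first player has a winning strategy — whichever of Portia (`s = true`, i.e. `+1`) or
Nerissa (`s = false`, i.e. `-1`) moves first. -/
theorem maak_first_player_wins (n : ℕ) (hn : 1 ≤ n) (s : Bool) :
    MaakWins n (n + 2) s (emptyRes (n + 2)) := by
  obtain ⟨u, rfl⟩ := Nat.exists_eq_add_of_le' hn
  have hp := profile_update_clasp₁ (profile_emptyRes (n := u + 1)) (some s)
  exact maakWins_succ_iff.2 ⟨clasp₁ _, rfl, not_determined_balanced hp,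
    by simpa using not_maakWins_balanced u hp⟩
end

section
/- In the twist-knot resolution model, the proportion of knotted full resolutions tends to 1/2 as the number of twist precrossings n tends to infinity. Precisely, if K(n) denotes the number of sign assignments (s_1, ..., s_n, c_1, c_2) ∈ {+1, -1}^{n+2} with c_1 = c_2 and (|s_1 + ... + s_n| ≥ 2 or s_1 + ... + s_n = c_1), then K(n) / 2^{n+2} → 1/2 as n → ∞. -/
/-- The number of knotted full resolutions of the twist-knot shadow with `n` twist
precrossings. -/
noncomputable def K (n : ℕ) : ℕ := Nat.card {f : Fin (n + 2) → Bool // Knotted n f}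

/-! A resolution can only be knotted when its two clasp signs agree, which leaves `2 ^ (n + 1)`
candidates, and such a candidate is knotted as soon as its twist sum has absolute value at least
`2`. Each of the twist sums `-1, 0, 1` is attained by at most `n.choose (n / 2)` sign vectors, so
`K n = 2 ^ (n + 1) - O(n.choose (n / 2))`, while `n.choose (n / 2) / 2 ^ n ≤ 2 / √n` by the
estimate `centralBinom m ^ 2 * (2 * m + 1) ≤ 16 ^ m`. -/

open Finset Filter Topology

section SignSum

variable {ι : Type*} [Fintype ι]

def signSum (g : ι → Bool) : ℤ := ∑ i, sgn (g i)

lemma signSum_eq_two_mul_card_sub (g : ι → Bool) :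
    signSum g = 2 * (#{i | g i = true} : ℤ) - Fintype.card ι := by
  have hsgn : ∀ b, sgn b = 2 * (if b = true then (1 : ℤ) else 0) - 1 := by decide
  simp only [signSum, hsgn, sum_sub_distrib, ← mul_sum, sum_boole, sum_const, card_univ,
    nsmul_eq_mul, mul_one]

variable [DecidableEq ι]

lemma card_signSum_eq_le (v : ℤ) :
    #{g : ι → Bool | signSum g = v} ≤ (Fintype.card ι).choose (Fintype.card ι / 2) := by
  set k := ((Fintype.card ι : ℤ) + v).toNat / 2
  have hmaps : ∀ g ∈ ({g : ι → Bool | signSum g = v} : Finset _),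
      ({i | g i = true} : Finset ι) ∈ powersetCard k univ := by
    intro g hg
    rw [mem_filter] at hg
    have := signSum_eq_two_mul_card_sub g
    rw [mem_powersetCard]
    exact ⟨subset_univ _, by omega⟩
  have hinj : Function.Injective fun g : ι → Bool => ({i | g i = true} : Finset ι) := by
    intro g g' h
    funext i
    simpa using Finset.ext_iff.mp h i
  calc #{g : ι → Bool | signSum g = v}
      ≤ #(powersetCard k (univ : Finset ι)) := card_le_card_of_injOn _ hmaps hinj.injOn
    _ = (Fintype.card ι).choose k := by rw [card_powersetCard, card_univ]
    _ ≤ _ := Nat.choose_le_middle k _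

lemma card_abs_signSum_lt_two_le :
    #{g : ι → Bool | |signSum g| < 2} ≤ 3 * (Fintype.card ι).choose (Fintype.card ι / 2) := by
  have hsplit : ({g : ι → Bool | |signSum g| < 2} : Finset _) =
      ({g | signSum g = -1} : Finset (ι → Bool)) ∪ (({g | signSum g = 0} : Finset (ι → Bool)) ∪
        ({g | signSum g = 1} : Finset (ι → Bool))) := by
    ext g
    simp only [mem_filter, mem_union, mem_univ, true_and, abs_lt]
    omega
  rw [hsplit]
  grw [card_union_le, card_union_le, card_signSum_eq_le, card_signSum_eq_le, card_signSum_eq_le]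
  omega

end SignSum

lemma twistSum_append (n : ℕ) (g : Fin n → Bool) (c : Fin 2 → Bool) :
    twistSum n (Fin.append g c) = signSum g :=
  sum_congr rfl fun i _ => congrArg sgn (Fin.append_left g c i)

def knottedEquiv (n : ℕ) : {f : Fin (n + 2) → Bool // Knotted n f} ≃
    {p : (Fin n → Bool) × Bool // 2 ≤ |signSum p.1| ∨ signSum p.1 = sgn p.2} where
  toFun f := ⟨(fun i => f.1 (Fin.castLE (by omega) i), f.1 ⟨n, by omega⟩), f.2.2⟩
  invFun p := ⟨Fin.append p.1.1 fun _ => p.1.2, by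
    have hn : Fin.append p.1.1 (fun _ => p.1.2) (⟨n, by omega⟩ : Fin (n + 2)) = p.1.2 :=
      Fin.append_right _ _ (0 : Fin 2)
    have hn1 : Fin.append p.1.1 (fun _ => p.1.2) (⟨n + 1, by omega⟩ : Fin (n + 2)) = p.1.2 :=
      Fin.append_right _ _ (1 : Fin 2)
    rw [Knotted, twistSum_append, hn, hn1]
    exact ⟨rfl, p.2⟩⟩
  left_inv f := by
    ext i
    refine Fin.addCases (fun i => ?_) (fun j => ?_) i
    · exact Fin.append_left _ (fun _ => f.1 ⟨n, by omega⟩) i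
    · refine (Fin.append_right _ (fun _ => f.1 ⟨n, by omega⟩) j).trans ?_
      fin_cases j
      · rfl
      · exact f.2.1
  right_inv p := by
    ext i
    · exact Fin.append_left p.1.1 (fun _ => p.1.2) i
    · exact Fin.append_right p.1.1 (fun _ => p.1.2) (0 : Fin 2)

lemma K_eq_card (n : ℕ) :
    K n = #{p : (Fin n → Bool) × Bool | 2 ≤ |signSum p.1| ∨ signSum p.1 = sgn p.2} := by
  rw [K, Nat.card_congr (knottedEquiv n), Nat.card_eq_fintype_card, Fintype.card_subtype]

lemma K_le (n : ℕ) : K n ≤ 2 ^ (n + 1) := by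
  grw [K_eq_card, card_filter_le, card_univ]
  simp [pow_succ]

lemma two_pow_le_K_add (n : ℕ) : 2 ^ (n + 1) ≤ K n + 6 * n.choose (n / 2) := by
  have hlarge : 2 * #{g : Fin n → Bool | 2 ≤ |signSum g|} ≤ K n := by
    rw [K_eq_card, mul_comm, ← Fintype.card_bool, ← card_univ, ← card_product]
    refine card_le_card fun p hp => ?_
    simp only [mem_product, mem_filter, mem_univ, true_and, and_true] at hp ⊢
    exact Or.inl hp
  have hsmall := card_abs_signSum_lt_two_le (ι := Fin n)
  have hsplit := card_filter_add_card_filter_not (s := (univ : Finset (Fin n → Bool)))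
    (fun g => 2 ≤ |signSum g|)
  simp only [not_le, card_univ, Fintype.card_fun, Fintype.card_bool, Fintype.card_fin]
    at hsplit hsmall
  rw [pow_succ]
  omega

lemma centralBinom_sq_mul_le (m : ℕ) : m.centralBinom ^ 2 * (2 * m + 1) ≤ 16 ^ m := by
  induction m with
  | zero => simp
  | succ m ih =>
    have hrec := Nat.succ_mul_centralBinom_succ m
    refine Nat.le_of_mul_le_mul_left (c := (m + 1) ^ 2) ?_ (by positivity)
    calc (m + 1) ^ 2 * ((m + 1).centralBinom ^ 2 * (2 * (m + 1) + 1))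
        = ((m + 1) * (m + 1).centralBinom) ^ 2 * (2 * m + 3) := by ring
      _ = 4 * (2 * m + 1) * (2 * m + 3) * (m.centralBinom ^ 2 * (2 * m + 1)) := by
        rw [hrec]; ring
      _ ≤ 16 * (m + 1) ^ 2 * 16 ^ m := Nat.mul_le_mul (by nlinarith) ih
      _ = (m + 1) ^ 2 * 16 ^ (m + 1) := by ring

lemma choose_half_sq_mul_le (n : ℕ) : n.choose (n / 2) ^ 2 * n ≤ 4 ^ (n + 1) := by
  set k := (n + 1) / 2
  have hmiddle : n.choose (n / 2) ≤ k.centralBinom :=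
    (Nat.choose_le_choose _ (by omega)).trans (Nat.choose_le_centralBinom _ k)
  calc n.choose (n / 2) ^ 2 * n ≤ k.centralBinom ^ 2 * (2 * k + 1) :=
        Nat.mul_le_mul (Nat.pow_le_pow_left hmiddle 2) (by omega)
    _ ≤ 16 ^ k := centralBinom_sq_mul_le k
    _ = 4 ^ (2 * k) := by rw [pow_mul]; norm_num
    _ ≤ 4 ^ (n + 1) := Nat.pow_le_pow_right (by norm_num) (by omega)

lemma tendsto_choose_half_div_two_pow :
    Tendsto (fun n : ℕ => (n.choose (n / 2) : ℝ) / 2 ^ n) atTop (𝓝 0) := by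
  have hbound : ∀ n : ℕ, 1 ≤ n → ((n.choose (n / 2) : ℝ) / 2 ^ n) ^ 2 ≤ 4 / n := by
    intro n hn
    have hcast : ((n.choose (n / 2) ^ 2 * n : ℕ) : ℝ) ≤ ((4 ^ (n + 1) : ℕ) : ℝ) := by
      exact_mod_cast choose_half_sq_mul_le n
    rw [div_pow, div_le_div_iff₀ (by positivity) (by exact_mod_cast hn)]
    push_cast at hcast
    linarith [show ((2 : ℝ) ^ n) ^ 2 = 4 ^ n by rw [← pow_mul, mul_comm, pow_mul]; norm_num,
      show (4 : ℝ) ^ (n + 1) = 4 * 4 ^ n from pow_succ' 4 n]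
  have hsq : Tendsto (fun n : ℕ => ((n.choose (n / 2) : ℝ) / 2 ^ n) ^ 2) atTop (𝓝 0) :=
    squeeze_zero' (.of_forall fun n => by positivity) (eventually_atTop.mpr ⟨1, hbound⟩)
      (tendsto_const_div_atTop_nhds_zero_nat 4)
  have hsqrt := (Real.continuous_sqrt.tendsto 0).comp hsq
  rw [Real.sqrt_zero] at hsqrt
  exact hsqrt.congr fun n => Real.sqrt_sq (by positivity)

/-- The proportion of knotted full resolutions tends to `1/2` as `n → ∞`. -/
theorem knotted_proportion_tendsto_half :
    Filter.Tendsto (fun n : ℕ => (K n : ℝ) / 2 ^ (n + 2)) Filter.atTop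
      (nhds (1 / 2)) := by
  have hlower : Tendsto (fun n : ℕ => 1 / 2 - 3 / 2 * ((n.choose (n / 2) : ℝ) / 2 ^ n))
      atTop (𝓝 (1 / 2)) := by
    simpa using tendsto_const_nhds.sub (tendsto_choose_half_div_two_pow.const_mul (3 / 2 : ℝ))
  refine tendsto_of_tendsto_of_tendsto_of_le_of_le hlower tendsto_const_nhds (fun n => ?_)
    (fun n => ?_)
  · have h : (2 : ℝ) ^ (n + 1) ≤ K n + 6 * n.choose (n / 2) := by
      exact_mod_cast two_pow_le_K_add n
    have hc : (n.choose (n / 2) : ℝ) / 2 ^ n * 2 ^ (n + 2) = 4 * n.choose (n / 2) := by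
      rw [pow_add, ← mul_assoc, div_mul_cancel₀ _ (by positivity)]
      ring
    rw [le_div_iff₀ (by positivity), sub_mul, mul_assoc, hc]
    linarith [pow_succ (2 : ℝ) (n + 1)]
  · have h : (K n : ℝ) ≤ 2 ^ (n + 1) := by exact_mod_cast K_le n
    rw [div_le_iff₀ (by positivity)]
    linarith [pow_succ (2 : ℝ) (n + 1)]
end
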